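/- Let m be a positive integer, for each i = 1,…,m let A_i : H ⇉ H be a maximally monotone set-valued operator, and suppose in addition that A_m is strongly monotone with modulus γ > 0. Let α > 0, u ∈ H, and v_i ∈ A_i(u) for i = 1,…,m. Let ψ_0 ∈ H and define ψ_i := J_{αA_i}(ψ_{i−1}) for i = 1,…,m. Then 2αγ‖ψ_m − u‖² + ‖ψ_m − u‖² − ‖ψ_0 − u‖² + Σ_{i=1}^m ‖ψ_i − ψ_{i−1}‖² ≤ 2α Σ_{i=1}^m ⟨v_i, u − ψ_i⟩. -/

import Mathlib

open scoped RealInnerProductSpace Pointwise BigOperators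

/-- A set-valued operator `A : H ⇉ H` is monotone. -/
def IsMonotoneOp {H : Type*} [NormedAddCommGroup H] [InnerProductSpace ℝ H]
    (A : H → Set H) : Prop :=
  ∀ ⦃x y u v : H⦄, u ∈ A x → v ∈ A y → 0 ≤ ⟪x - y, u - v⟫

/-- A set-valued operator is maximally monotone. -/
def IsMaxMonotoneOp {H : Type*} [NormedAddCommGroup H] [InnerProductSpace ℝ H]
    (A : H → Set H) : Prop :=
  IsMonotoneOp A ∧
    ∀ B : H → Set H, IsMonotoneOp B → (∀ x, A x ⊆ B x) → ∀ x, B x ⊆ A x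

/-- A set-valued operator is strongly monotone with modulus `γ`. -/
def IsStronglyMonotoneOp {H : Type*} [NormedAddCommGroup H] [InnerProductSpace ℝ H]
    (A : H → Set H) (γ : ℝ) : Prop :=
  ∀ ⦃x y u v : H⦄, u ∈ A x → v ∈ A y → γ * ‖x - y‖ ^ 2 ≤ ⟪x - y, u - v⟫

/-!
Write `φ - ψ = α w` with `w ∈ A ψ`. Monotonicity of `A` at the pairs `(ψ, w)` and `(u, v)`
gives `2αγ‖ψ - u‖² ≤ 2⟪ψ - u, φ - ψ⟫ - 2α⟪ψ - u, v⟫`, and the polarization identity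
`2⟪ψ - u, φ - ψ⟫ = ‖φ - u‖² - ‖ψ - u‖² - ‖ψ - φ‖²` turns this into the one-step inequality.
Summing the one-step inequalities along the chain telescopes the terms `‖ψᵢ - u‖²`; only the
last step uses strong monotonicity.
-/

section

variable {H : Type*} [NormedAddCommGroup H] [InnerProductSpace ℝ H]

theorem IsMonotoneOp.isStronglyMonotoneOp_zero {A : H → Set H} (hA : IsMonotoneOp A) :
    IsStronglyMonotoneOp A 0 := fun _ _ _ _ hu hv => by
  simpa using hA hu hv

theorem two_mul_inner_sub_sub_eq (u φ ψ : H) :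
    2 * ⟪ψ - u, φ - ψ⟫ = ‖φ - u‖ ^ 2 - ‖ψ - u‖ ^ 2 - ‖ψ - φ‖ ^ 2 := by
  have h := norm_add_sq_real (ψ - u) (φ - ψ)
  rw [sub_add_sub_cancel'] at h
  rw [h, norm_sub_rev ψ φ]
  ring

theorem IsStronglyMonotoneOp.resolvent_step_le {A : H → Set H} {γ α : ℝ}
    (hA : IsStronglyMonotoneOp A γ) (hα : 0 ≤ α) {u v φ ψ : H} (hv : v ∈ A u)
    (hψ : φ - ψ ∈ α • A ψ) :
    2 * α * γ * ‖ψ - u‖ ^ 2 + ‖ψ - u‖ ^ 2 - ‖φ - u‖ ^ 2 + ‖ψ - φ‖ ^ 2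
      ≤ 2 * α * ⟪v, u - ψ⟫ := by
  obtain ⟨w, hw, hαw⟩ := Set.mem_smul_set.mp hψ
  have hmono : α * (γ * ‖ψ - u‖ ^ 2) ≤ α * ⟪ψ - u, w - v⟫ :=
    mul_le_mul_of_nonneg_left (hA hw hv) hα
  have hexpand : α * ⟪ψ - u, w - v⟫ = ⟪ψ - u, φ - ψ⟫ + α * ⟪v, u - ψ⟫ := by
    rw [← hαw, inner_sub_right, real_inner_smul_right, real_inner_comm v, ← neg_sub ψ u,
      inner_neg_right]
    ring
  linarith [two_mul_inner_sub_sub_eq u φ ψ]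

theorem resolvent_chain_le {n : ℕ} {A : ℕ → H → Set H}
    (hA : ∀ i, 1 ≤ i → i ≤ n → IsMonotoneOp (A i)) {α : ℝ} (hα : 0 ≤ α) {u : H}
    {v : ℕ → H} (hv : ∀ i, 1 ≤ i → i ≤ n → v i ∈ A i u) {ψ : ℕ → H}
    (hψ : ∀ i, 1 ≤ i → i ≤ n → ψ (i - 1) - ψ i ∈ α • A i (ψ i)) :
    ‖ψ n - u‖ ^ 2 - ‖ψ 0 - u‖ ^ 2 + ∑ i ∈ Finset.Icc 1 n, ‖ψ i - ψ (i - 1)‖ ^ 2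
      ≤ 2 * α * ∑ i ∈ Finset.Icc 1 n, ⟪v i, u - ψ i⟫ := by
  induction n with
  | zero => simp
  | succ n ih =>
    have hprev := ih (fun i h1 h2 => hA i h1 (by omega)) (fun i h1 h2 => hv i h1 (by omega))
      (fun i h1 h2 => hψ i h1 (by omega))
    have hlast := ((hA (n + 1) (by omega) le_rfl).isStronglyMonotoneOp_zero).resolvent_step_le hα
      (hv (n + 1) (by omega) le_rfl) (hψ (n + 1) (by omega) le_rfl)
    rw [Finset.sum_Icc_succ_top (by omega), Finset.sum_Icc_succ_top (by omega)]
    simp only [add_tsub_cancel_right, mul_zero, zero_mul] at hlast ⊢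
    linarith

end

theorem resolvent_chain_inequality_strong_general
    {H : Type*} [NormedAddCommGroup H] [InnerProductSpace ℝ H]
    (m : ℕ) (hm : 1 ≤ m)
    (A : ℕ → H → Set H) (hA : ∀ i, 1 ≤ i → i ≤ m → IsMaxMonotoneOp (A i))
    (γ : ℝ) (hAm : IsStronglyMonotoneOp (A m) γ)
    (α : ℝ) (hα : 0 < α)
    (u : H) (v : ℕ → H) (hv : ∀ i, 1 ≤ i → i ≤ m → v i ∈ A i u)
    (ψ : ℕ → H)
    (hψ : ∀ i, 1 ≤ i → i ≤ m → ψ (i - 1) - ψ i ∈ α • A i (ψ i)) :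
    2 * α * γ * ‖ψ m - u‖ ^ 2
        + ‖ψ m - u‖ ^ 2 - ‖ψ 0 - u‖ ^ 2 + ∑ i ∈ Finset.Icc 1 m, ‖ψ i - ψ (i - 1)‖ ^ 2
      ≤ 2 * α * ∑ i ∈ Finset.Icc 1 m, ⟪v i, u - ψ i⟫ := by
  obtain ⟨n, rfl⟩ : ∃ n, m = n + 1 := ⟨m - 1, by omega⟩
  have hchain := resolvent_chain_le (n := n) (fun i h1 h2 => (hA i h1 (by omega)).1) hα.le
    (fun i h1 h2 => hv i h1 (by omega)) (fun i h1 h2 => hψ i h1 (by omega))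
  have hlast := hAm.resolvent_step_le hα.le (hv (n + 1) hm le_rfl) (hψ (n + 1) hm le_rfl)
  rw [Finset.sum_Icc_succ_top (by omega), Finset.sum_Icc_succ_top (by omega)]
  rw [add_tsub_cancel_right] at hlast ⊢
  linarith

/-- The telescoped resolvent inequality along a chain of resolvent steps when the last
operator `A_m` is strongly monotone. -/
theorem resolvent_chain_inequality_strong
    {H : Type*} [NormedAddCommGroup H] [InnerProductSpace ℝ H]
    (m : ℕ) (hm : 1 ≤ m)
    (A : ℕ → H → Set H) (hA : ∀ i, 1 ≤ i → i ≤ m → IsMaxMonotoneOp (A i))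
    (γ : ℝ) (hγ : 0 < γ) (hAm : IsStronglyMonotoneOp (A m) γ)
    (α : ℝ) (hα : 0 < α)
    (u : H) (v : ℕ → H) (hv : ∀ i, 1 ≤ i → i ≤ m → v i ∈ A i u)
    (ψ : ℕ → H)
    (hψ : ∀ i, 1 ≤ i → i ≤ m → ψ (i - 1) - ψ i ∈ α • A i (ψ i)) :
    2 * α * γ * ‖ψ m - u‖ ^ 2
        + ‖ψ m - u‖ ^ 2 - ‖ψ 0 - u‖ ^ 2 + ∑ i ∈ Finset.Icc 1 m, ‖ψ i - ψ (i - 1)‖ ^ 2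
      ≤ 2 * α * ∑ i ∈ Finset.Icc 1 m, ⟪v i, u - ψ i⟫ :=
  resolvent_chain_inequality_strong_general m hm A hA γ hAm α hα u v hv ψ hψ
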